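/- BPE derives from its run a valid k-packing of the input of size equal to its utility: for every string s and k, there exists a k-packing of s of size bpe(s,k); consequently bpe(s,k) ≤ P_k(s). -/
import Mathlib


variable {α : Type*} [DecidableEq α]

/-- Full greedy left-to-right replacement of the pair `ab` by `c`. -/
def replace (a b c : α) : List α → List α
  | [] => []
  | [x] => [x]
  | x :: y :: rest =>
    if x = a ∧ y = b then c :: replace a b c rest
    else x :: replace a b c (y :: rest)

/-- Replacement of every occurrence of the symbol `c` by the pair `ab`. -/
def expand (a b c : α) : List α → List α
  | [] => []
  | x :: rest => if x = c then a :: b :: expand a b c rest else x :: expand a b c rest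

/-- `t` is obtained from `s` by one partial replacement rule (replacing some
non-overlapping occurrences of a pair `ab` by a symbol `c`, invertibly). -/
def PartialStep (s t : List α) : Prop := ∃ a b c : α, expand a b c t = s

/-- `t` is obtained from `s` by one full merge of a pair `ab` into a fresh symbol `c`. -/
def FullStep (s t : List α) : Prop := ∃ a b c : α, c ∉ s ∧ t = replace a b c s

/-- A greedy (BPE) step: a full merge minimizing the resulting length. -/
def GreedyStep (s t : List α) : Prop :=
  FullStep s t ∧ ∀ u : List α, FullStep s u → t.length ≤ u.length

/-- `t` is obtained from `s` by a partial merge sequence of length `k`. -/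
def PartialReach : ℕ → List α → List α → Prop
  | 0, s, t => t = s
  | k+1, s, t => ∃ u, PartialStep s u ∧ PartialReach k u t

/-- `t` is obtained from `s` by a full merge sequence of length `k`. -/
def FullReach : ℕ → List α → List α → Prop
  | 0, s, t => t = s
  | k+1, s, t => ∃ u, FullStep s u ∧ FullReach k u t

/-- `t` is obtained from `s` by a run of BPE with `k` greedy merge rounds. -/
def GreedyReach : ℕ → List α → List α → Prop
  | 0, s, t => t = s
  | k+1, s, t => ∃ u, GreedyStep s u ∧ GreedyReach k u t

/-- Optimal utility of partial merge sequences of length `k` (the OPE optimum). -/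
noncomputable def OPT (s : List α) (k : ℕ) : ℕ :=
  sSup {u : ℕ | ∃ t : List α, PartialReach k s t ∧ u = s.length - t.length}

/-- Optimal utility of full merge sequences of length `k` (the OMS optimum). -/
noncomputable def OPTm (s : List α) (k : ℕ) : ℕ :=
  sSup {u : ℕ | ∃ t : List α, FullReach k s t ∧ u = s.length - t.length}

/-- A pair packing: non-overlapping indices at which a common pair occurs in `s`
(0-based indices). -/
def IsPairPacking (s : List α) (P : Finset ℕ) : Prop :=
  (∀ i ∈ P, i + 1 < s.length) ∧
  (∀ i ∈ P, ∀ j ∈ P, i ≠ j → 2 ≤ Nat.dist i j) ∧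
  ∃ a b : α, ∀ i ∈ P, s[i]? = some a ∧ s[i+1]? = some b

/-- A `k`-packing: a disjoint union of `k` pair packings. -/
def IsKPacking (s : List α) (k : ℕ) (P : Fin k → Finset ℕ) : Prop :=
  (∀ i, IsPairPacking s (P i)) ∧ ∀ i j, i ≠ j → Disjoint (P i) (P j)

/-- `Pk s k`: maximum size of a `k`-packing of `s`. -/
noncomputable def Pk (s : List α) (k : ℕ) : ℕ :=
  sSup {n : ℕ | ∃ P : Fin k → Finset ℕ, IsKPacking s k P ∧ n = ∑ i, (P i).card}

/-- Number of (possibly overlapping) occurrences of the pair `ab` in `s`. -/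
def freq (s : List α) (a b : α) : ℕ :=
  ((Finset.range s.length).filter (fun i => s[i]? = some a ∧ s[i+1]? = some b)).card

/-- `Fk s k`: total number of occurrences of the `k` most frequent pairs in `s`. -/
noncomputable def Fk (s : List α) (k : ℕ) : ℕ :=
  sSup {n : ℕ | ∃ Q : Finset (α × α), Q.card ≤ k ∧ n = ∑ p ∈ Q, freq s p.1 p.2}

theorem expand_append (a b c : α) (l₁ l₂ : List α) :
    expand a b c (l₁ ++ l₂) = expand a b c l₁ ++ expand a b c l₂ := by
  induction l₁ with
  | nil => rfl
  | cons x l ih =>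
    by_cases h : x = c <;> simp [expand, h, ih]

theorem expand_length (a b c : α) (l : List α) :
    (expand a b c l).length = l.length + l.count c := by
  induction l with
  | nil => rfl
  | cons x l ih =>
    by_cases h : x = c <;> simp [expand, h, ih, List.count_cons] <;> omega

theorem expand_replace (a b c : α) : ∀ l : List α, c ∉ l →
    expand a b c (replace a b c l) = l
  | [], _ => rfl
  | [x], h => by
    have hx : x ≠ c := by simp at h; exact fun e => h e.symm
    simp [replace, expand, hx]
  | x :: y :: rest, h => by
    have hx : x ≠ c := by simp at h; exact fun e => h.1 e.symm
    have hc : c ∉ y :: rest := by simp at h ⊢; tauto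
    have hc' : c ∉ rest := by simp at h ⊢; tauto
    by_cases hab : x = a ∧ y = b
    · simp [replace, hab, expand, expand_replace a b c rest hc', hab.1, hab.2]
    · simp [replace, hab, expand, hx, expand_replace a b c (y :: rest) hc]

theorem replace_length_le (a b c : α) : ∀ l : List α, (replace a b c l).length ≤ l.length
  | [] => le_refl _
  | [x] => le_refl _
  | x :: y :: rest => by
    by_cases hab : x = a ∧ y = b
    · simp only [replace, if_pos hab]
      have := replace_length_le a b c rest
      simp only [List.length_cons]; omega
    · simp only [replace, if_neg hab]
      have := replace_length_le a b c (y :: rest)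
      simp only [List.length_cons] at *; omega

def fmap (c : α) (u : List α) (i : ℕ) : ℕ := i + (u.take (i+1)).count c

theorem count_take_mono (c : α) (u : List α) {m n : ℕ} (h : m ≤ n) :
    (u.take m).count c ≤ (u.take n).count c := by
  have : u.take m = (u.take n).take m := by rw [List.take_take, min_eq_left h]
  rw [this]
  exact ((u.take n).take_sublist m).count_le c

theorem fmap_add_le (c : α) (u : List α) {i j : ℕ} (h : i ≤ j) :
    fmap c u i + (j - i) ≤ fmap c u j := by
  have := count_take_mono c u (show i+1 ≤ j+1 by omega)
  unfold fmap; omega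

theorem fmap_strictMono (c : α) (u : List α) : StrictMono (fmap c u) := by
  intro i j h
  have := fmap_add_le c u (le_of_lt h)
  omega

theorem take_succ_of_getElem? {u : List α} {i : ℕ} {x : α} (hx : u[i]? = some x) :
    u.take (i+1) = u.take i ++ [x] := by
  rw [List.take_succ, hx]; rfl

theorem fmap_c_gap {c : α} {u : List α} {i j : ℕ} (hi : u[i]? = some c) (h : j < i) :
    fmap c u j + 2 ≤ fmap c u i := by
  have h1 : (u.take (j+1)).count c ≤ (u.take i).count c := count_take_mono c u h
  have h2 : (u.take (i+1)).count c = (u.take i).count c + 1 := by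
    rw [take_succ_of_getElem? hi, List.count_append]; simp
  unfold fmap; omega

theorem fmap_pos {c : α} {u : List α} {i : ℕ} (hi : u[i]? = some c) :
    1 ≤ fmap c u i := by
  have h2 : (u.take (i+1)).count c = (u.take i).count c + 1 := by
    rw [take_succ_of_getElem? hi, List.count_append]; simp
  unfold fmap; omega

theorem expand_take_length (a b c : α) (u : List α) {i : ℕ} (hi : i < u.length) :
    (expand a b c (u.take (i+1))).length = fmap c u i + 1 := by
  rw [expand_length, List.length_take]
  unfold fmap; omega

theorem decomp (u : List α) {i : ℕ} {x : α} (hx : u[i]? = some x) :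
    u = u.take i ++ x :: u.drop (i+1) := by
  obtain ⟨h, rfl⟩ := List.getElem?_eq_some_iff.mp hx
  rw [← List.drop_eq_getElem_cons h, List.take_append_drop]

theorem expand_getElem_last (a b c : α) (u : List α) {i : ℕ} {x : α} (hx : u[i]? = some x) :
    (expand a b c u)[fmap c u i]? = some (if x = c then b else x) ∧
    (x = c → (expand a b c u)[fmap c u i - 1]? = some a) := by
  have hi : i < u.length := (List.getElem?_eq_some_iff.mp hx).1
  have hL : (expand a b c (u.take i)).length = i + (u.take i).count c := by
    rw [expand_length, List.length_take]; omega
  have hf : fmap c u i = i + (u.take i).count c + (if x = c then 1 else 0) := by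
    unfold fmap
    rw [take_succ_of_getElem? hx, List.count_append]
    by_cases h : x = c <;> simp [h, List.count_cons] <;> omega
  have hu : expand a b c u
      = expand a b c (u.take i) ++ (expand a b c [x] ++ expand a b c (u.drop (i+1))) := by
    conv_lhs => rw [decomp u hx]
    rw [show u.take i ++ x :: u.drop (i+1) = u.take i ++ ([x] ++ u.drop (i+1)) by simp]
    rw [expand_append, expand_append]
  rw [hu]
  set L := expand a b c (u.take i) with hLdef
  by_cases h : x = c
  · have hx1 : expand a b c [x] = [a, b] := by simp [expand, h]
    rw [hx1, hf, if_pos h]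
    constructor
    · rw [List.getElem?_append_right (by omega)]
      rw [show i + (u.take i).count c + 1 - L.length = 1 by omega]
      simp [h]
    · intro _
      rw [List.getElem?_append_right (by omega)]
      rw [show i + (u.take i).count c + 1 - 1 - L.length = 0 by omega]
      rfl
  · have hx1 : expand a b c [x] = [x] := by simp [expand, h]
    rw [hx1, hf, if_neg h]
    refine ⟨?_, fun hc => absurd hc h⟩
    rw [List.getElem?_append_right (by omega)]
    rw [show i + (u.take i).count c + 0 - L.length = 0 by omega]
    simp [h]

theorem expand_getElem_next (a b c : α) (u : List α) {i : ℕ} {y : α} (hy : u[i+1]? = some y) :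
    (expand a b c u)[fmap c u i + 1]? = some (if y = c then a else y) := by
  have hi1 : i + 1 < u.length := (List.getElem?_eq_some_iff.mp hy).1
  have hd : u.drop (i+1) = y :: u.drop (i+2) := by
    obtain ⟨h, rfl⟩ := List.getElem?_eq_some_iff.mp hy
    exact List.drop_eq_getElem_cons h
  have hu : expand a b c u = expand a b c (u.take (i+1)) ++ expand a b c (u.drop (i+1)) := by
    conv_lhs => rw [← List.take_append_drop (i+1) u]
    rw [expand_append]
  rw [hu]
  rw [List.getElem?_append_right (by rw [expand_take_length a b c u (by omega)])]
  rw [expand_take_length a b c u (by omega)]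
  simp only [Nat.sub_self]
  rw [hd]
  by_cases h : y = c <;> simp [expand, h]

theorem card_filter_range_count (u : List α) (c : α) (n : ℕ) :
    ((Finset.range n).filter fun i => u[i]? = some c).card = (u.take n).count c := by
  induction n with
  | zero => simp
  | succ n ih =>
    rw [Finset.range_add_one, Finset.filter_insert, List.take_succ]
    by_cases h : u[n]? = some c
    · rw [if_pos h, Finset.card_insert_of_notMem (by simp), ih, h, List.count_append]
      simp
    · rw [if_neg h, ih, List.count_append]
      cases h' : u[n]? with
      | none => simp
      | some x =>
        have hxc : x ≠ c := fun e => h (by rw [h', e])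
        simp [List.count_cons, hxc]

theorem greedy_length_le : ∀ {k : ℕ} {s t : List α}, GreedyReach k s t → t.length ≤ s.length := by
  intro k
  induction k with
  | zero => intro s t h; exact le_of_eq (congrArg List.length (h : t = s))
  | succ k ih =>
    rintro s t ⟨u, ⟨⟨a, b, c, -, hu⟩, -⟩, hre⟩
    exact (ih hre).trans (hu ▸ replace_length_le a b c s)

theorem main_packing : ∀ {k : ℕ} {s t : List α}, GreedyReach k s t →
    ∃ P : Fin k → Finset ℕ, IsKPacking s k P ∧ ∑ i, (P i).card = s.length - t.length := by
  intro k
  induction k with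
  | zero =>
    intro s t h
    refine ⟨fun i => i.elim0, ⟨fun i => i.elim0, fun i j _ => i.elim0⟩, ?_⟩
    rw [(h : t = s)]; simp
  | succ k ih =>
    rintro s t ⟨u, ⟨⟨a, b, c, hc, hu⟩, -⟩, hre⟩
    have hs : expand a b c u = s := by rw [hu]; exact expand_replace a b c s hc
    have hlen : s.length = u.length + u.count c := by rw [← hs, expand_length]
    have htu : t.length ≤ u.length := greedy_length_le hre
    obtain ⟨Q, ⟨hQp, hQd⟩, hQc⟩ := ih hre
    have hinj : Function.Injective (fmap c u) := (fmap_strictMono c u).injective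
    set C : Finset ℕ := (Finset.range u.length).filter (fun i => u[i]? = some c) with hC
    have hCmem : ∀ i ∈ C, u[i]? = some c := fun i hi => (Finset.mem_filter.mp hi).2
    have hCcard : C.card = u.count c := by
      have := card_filter_range_count u c u.length
      rwa [List.take_length] at this
    -- facts about C elements
    have hCb : ∀ i ∈ C, s[fmap c u i]? = some b := by
      intro i hi
      have := (expand_getElem_last a b c u (hCmem i hi)).1
      rw [hs] at this; simpa using this
    have hCa : ∀ i ∈ C, s[fmap c u i - 1]? = some a := by
      intro i hi
      have := (expand_getElem_last a b c u (hCmem i hi)).2 rfl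
      rwa [hs] at this
    have hCpos : ∀ i ∈ C, 1 ≤ fmap c u i := fun i hi => fmap_pos (hCmem i hi)
    set P : Fin (k+1) → Finset ℕ :=
      Fin.cons (C.image fun i => fmap c u i - 1) (fun j => (Q j).image (fmap c u)) with hP
    have hmono : ∀ {i j : ℕ}, i ≤ j → fmap c u i + (j - i) ≤ fmap c u j := fun h => fmap_add_le c u h
    have hdisj01 : ∀ j, Disjoint (C.image fun i => fmap c u i - 1) ((Q j).image (fmap c u)) := by
      intro j
      rw [Finset.disjoint_left]
      rintro m hm hm'
      obtain ⟨i, hiC, rfl⟩ := Finset.mem_image.mp hm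
      obtain ⟨i', hi'Q, he⟩ := Finset.mem_image.mp hm'
      have hpos := hCpos i hiC
      rcases le_or_gt i i' with h | h
      · have := hmono h; omega
      · have := fmap_c_gap (hCmem i hiC) h; omega
    refine ⟨P, ⟨?_, ?_⟩, ?_⟩
    · -- each piece is a pair packing
      intro i
      refine Fin.cases ?_ ?_ i
      · simp only [hP, Fin.cons_zero]
        refine ⟨?_, ?_, a, b, ?_⟩
        · rintro m hm
          obtain ⟨i, hiC, rfl⟩ := Finset.mem_image.mp hm
          have hlt := (List.getElem?_eq_some_iff.mp (hCb i hiC)).1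
          have := hCpos i hiC
          omega
        · rintro m hm m' hm' hne
          obtain ⟨i, hiC, rfl⟩ := Finset.mem_image.mp hm
          obtain ⟨i', hi'C, rfl⟩ := Finset.mem_image.mp hm'
          have h1 := hCpos i hiC
          have h2 := hCpos i' hi'C
          rcases lt_trichotomy i i' with h | rfl | h
          · have := fmap_c_gap (hCmem i' hi'C) h; simp [Nat.dist]; omega
          · exact absurd rfl hne
          · have := fmap_c_gap (hCmem i hiC) h; simp [Nat.dist]; omega
        · rintro m hm
          obtain ⟨i, hiC, rfl⟩ := Finset.mem_image.mp hm
          refine ⟨hCa i hiC, ?_⟩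
          rw [show fmap c u i - 1 + 1 = fmap c u i by have := hCpos i hiC; omega]
          exact hCb i hiC
      · intro j
        simp only [hP, Fin.cons_succ]
        obtain ⟨hb', hd', a', b', hp'⟩ := hQp j
        have key : ∀ i ∈ Q j, s[fmap c u i]? = some (if a' = c then b else a') ∧
            s[fmap c u i + 1]? = some (if b' = c then a else b') := by
          intro i hi
          constructor
          · have := (expand_getElem_last a b c u (hp' i hi).1).1
            rwa [hs] at this
          · have := expand_getElem_next a b c u (hp' i hi).2
            rwa [hs] at this
        refine ⟨?_, ?_, (if a' = c then b else a'), (if b' = c then a else b'), ?_⟩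
        · rintro m hm
          obtain ⟨i, hiQ, rfl⟩ := Finset.mem_image.mp hm
          exact (List.getElem?_eq_some_iff.mp (key i hiQ).2).1
        · rintro m hm m' hm' hne
          obtain ⟨i, hiQ, rfl⟩ := Finset.mem_image.mp hm
          obtain ⟨i', hi'Q, rfl⟩ := Finset.mem_image.mp hm'
          have hii' : i ≠ i' := fun e => hne (by rw [e])
          have hdist := hd' i hiQ i' hi'Q hii'
          rcases le_or_gt i i' with h | h
          · have := hmono h; simp [Nat.dist] at hdist ⊢; omega
          · have := hmono (le_of_lt h); simp [Nat.dist] at hdist ⊢; omega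
        · rintro m hm
          obtain ⟨i, hiQ, rfl⟩ := Finset.mem_image.mp hm
          exact key i hiQ
    · -- disjointness
      intro i j hne
      rcases Fin.eq_zero_or_eq_succ i with rfl | ⟨i', rfl⟩ <;>
        rcases Fin.eq_zero_or_eq_succ j with rfl | ⟨j', rfl⟩
      · exact absurd rfl hne
      · simp only [hP, Fin.cons_zero, Fin.cons_succ]
        exact hdisj01 j'
      · simp only [hP, Fin.cons_zero, Fin.cons_succ]
        exact (hdisj01 i').symm
      · simp only [hP, Fin.cons_succ]
        refine (Finset.disjoint_image hinj).mpr (hQd i' j' ?_)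
        exact fun e => hne (by rw [e])
    · -- cardinality
      rw [Fin.sum_univ_succ]
      simp only [hP, Fin.cons_zero, Fin.cons_succ]
      have hc0 : (C.image fun i => fmap c u i - 1).card = C.card := by
        refine Finset.card_image_of_injOn ?_
        intro i hiC i' hi'C he
        simp only at he
        by_contra hne
        have h1 := hCpos i hiC
        have h2 := hCpos i' hi'C
        rcases lt_or_gt_of_ne hne with h | h
        · have := fmap_c_gap (hCmem i' hi'C) h; omega
        · have := fmap_c_gap (hCmem i hiC) h; omega
      have hcs : ∀ j, ((Q j).image (fmap c u)).card = (Q j).card :=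
        fun j => Finset.card_image_of_injective _ hinj
      rw [hc0, hCcard]
      simp only [hcs]
      rw [hQc]
      omega

theorem sum_le_length {k : ℕ} {s : List α} {P : Fin k → Finset ℕ}
    (hP : IsKPacking s k P) : ∑ i, (P i).card ≤ s.length := by
  obtain ⟨hp, hd⟩ := hP
  have hsub : ∀ i, P i ⊆ Finset.range s.length := by
    intro i m hm
    have := (hp i).1 m hm
    exact Finset.mem_range.mpr (by omega)
  calc ∑ i, (P i).card = (Finset.univ.biUnion P).card :=
        (Finset.card_biUnion (fun i _ j _ h => hd i j h)).symm
    _ ≤ (Finset.range s.length).card :=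
        Finset.card_le_card (Finset.biUnion_subset.mpr fun i _ => hsub i)
    _ = s.length := by simp

/-- every run of BPE yields a `k`-packing of `s` of size equal to
its utility; consequently `bpe(s,k) ≤ P_k(s)`. -/
theorem stmt14 {α : Type*} [DecidableEq α] (s t : List α) (k : ℕ)
    (h : GreedyReach k s t) :
    (∃ P : Fin k → Finset ℕ, IsKPacking s k P ∧
      ∑ i, (P i).card = s.length - t.length) ∧
    s.length - t.length ≤ Pk s k := by
  obtain ⟨P, hP, hcard⟩ := main_packing h
  refine ⟨⟨P, hP, hcard⟩, ?_⟩
  refine le_csSup ⟨s.length, ?_⟩ ⟨P, hP, hcard.symm⟩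
  rintro n ⟨P', hP', rfl⟩
  exact sum_le_length hP'
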